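/- arXiv:1006.2891 — 2 statements merged into one kernel-verified Lean document; each statement's English description precedes it below -/
import Mathlib

section
/- Let y : I → ℝ be a positive twice-differentiable solution of y'' + y^(k₂) y' + μ₁ y^(2k₂+1) = 0 on an open interval I, with k₂ ≠ 0, k₂ ≠ −1, μ₁ real. Suppose φ : I → ℝ satisfies φ'(x) = y(x)^(k₂) with φ a bijection onto an interval and differentiable inverse ψ. Then u(t) := y(ψ(t))^(k₂+1) satisfies u'' + u' + μ₁(k₂+1)u = 0. -/
/-!
With `t = φ x` we have `dt = y^k₂ dx`, so `d/dt = y^(-k₂) d/dx`. Hence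
`u' = (k₂ + 1) y^(-k₂) y^k₂ y' = (k₂ + 1) y'` and `u'' = (k₂ + 1) y^(-k₂) y''`, and
`u'' + u' + μ₁ (k₂ + 1) u = (k₂ + 1) y^(-k₂) (y'' + y^k₂ y' + μ₁ y^(2k₂+1)) = 0`.
-/

open Set Filter Topology

theorem HasDerivAt.of_eventually_leftInverse {𝕜 : Type*} [NontriviallyNormedField 𝕜]
    {φ ψ : 𝕜 → 𝕜} {φ' x : 𝕜} (hφ : HasDerivAt φ φ' x) (hψ : DifferentiableAt 𝕜 ψ (φ x))
    (hinv : ∀ᶠ z in 𝓝 x, ψ (φ z) = z) : HasDerivAt ψ φ'⁻¹ (φ x) := by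
  have hcomp : _root_.deriv ψ (φ x) * φ' = 1 :=
    (hψ.hasDerivAt.comp x hφ).unique ((hasDerivAt_id x).congr_of_eventuallyEq hinv)
  exact eq_inv_of_mul_eq_one_left hcomp ▸ hψ.hasDerivAt

theorem HasDerivAt.comp_of_leftInverse {𝕜 : Type*} [NontriviallyNormedField 𝕜]
    {f ψ φ : 𝕜 → 𝕜} {f' c x : 𝕜} (hf : HasDerivAt f f' x) (hψ : HasDerivAt ψ c (φ x))
    (hinv : ψ (φ x) = x) : HasDerivAt (fun t => f (ψ t)) (f' * c) (φ x) :=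
  (hinv ▸ hf).comp (φ x) hψ

theorem isOpen_image_of_hasDerivAt_pos {f f' : ℝ → ℝ} {s : Set ℝ} (hs : IsOpen s)
    (hf : ∀ x ∈ s, HasDerivAt f (f' x) x) (hf' : ∀ x ∈ s, 0 < f' x) : IsOpen (f '' s) := by
  refine isOpen_iff_mem_nhds.2 ?_
  rintro _ ⟨x, hx, rfl⟩
  obtain ⟨a, b, -, hab_nhds, habs⟩ := exists_Icc_mem_subset_of_mem_nhds (hs.mem_nhds hx)
  have hxab : x ∈ Ioo a b := interior_Icc (a := a) ▸ mem_interior_iff_mem_nhds.2 hab_nhds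
  have hab : a ≤ b := (hxab.1.trans hxab.2).le
  have hcont : ContinuousOn f (Icc a b) := fun z hz =>
    (hf z (habs hz)).continuousAt.continuousWithinAt
  have hmono : StrictMonoOn f (Icc a b) := by
    refine strictMonoOn_of_deriv_pos (convex_Icc a b) hcont fun z hz => ?_
    have hzs : z ∈ s := habs (interior_subset hz)
    exact (hf z hzs).deriv ▸ hf' z hzs
  have hleft : f a < f x := hmono (left_mem_Icc.2 hab) (Ioo_subset_Icc_self hxab) hxab.1
  have hright : f x < f b := hmono (Ioo_subset_Icc_self hxab) (right_mem_Icc.2 hab) hxab.2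
  exact mem_of_superset (Ioo_mem_nhds hleft hright)
    ((intermediate_value_Ioo hab hcont).trans (image_mono (Ioo_subset_Icc_self.trans habs)))

theorem stmt_13_general (k₂ μ₁ : ℝ)
    (I : Set ℝ) (hI : IsOpen I) (y φ ψ : ℝ → ℝ)
    (hpos : ∀ x ∈ I, 0 < y x)
    (hy1 : ∀ x ∈ I, DifferentiableAt ℝ y x)
    (hy2 : ∀ x ∈ I, DifferentiableAt ℝ (deriv y) x)
    (hode : ∀ x ∈ I,
      deriv (deriv y) x + (y x) ^ k₂ * deriv y x + μ₁ * (y x) ^ (2 * k₂ + 1) = 0)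
    (hφ : ∀ x ∈ I, HasDerivAt φ ((y x) ^ k₂) x)
    (hinv : ∀ x ∈ I, ψ (φ x) = x)
    (hψ : ∀ t ∈ φ '' I, DifferentiableAt ℝ ψ t) :
    ∀ t ∈ φ '' I,
      deriv (deriv (fun s : ℝ => (y (ψ s)) ^ (k₂ + 1))) t
        + deriv (fun s : ℝ => (y (ψ s)) ^ (k₂ + 1)) t
        + μ₁ * (k₂ + 1) * (y (ψ t)) ^ (k₂ + 1) = 0 := by
  set u : ℝ → ℝ := fun s => y (ψ s) ^ (k₂ + 1)
  have hyk : ∀ x ∈ I, 0 < y x ^ k₂ := fun x hx => Real.rpow_pos_of_pos (hpos x hx) k₂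
  have hψ' : ∀ x ∈ I, HasDerivAt ψ (y x ^ k₂)⁻¹ (φ x) := fun x hx =>
    (hφ x hx).of_eventually_leftInverse (hψ _ ⟨x, hx, rfl⟩)
      (eventually_of_mem (hI.mem_nhds hx) hinv)
  have hu' : ∀ x ∈ I, HasDerivAt u ((k₂ + 1) * deriv y x) (φ x) := by
    intro x hx
    refine (((hy1 x hx).hasDerivAt.rpow_const (Or.inl (hpos x hx).ne')).comp_of_leftInverse
      (hψ' x hx) (hinv x hx)).congr_deriv ?_
    have hyk_ne := (hyk x hx).ne'
    rw [add_sub_cancel_right]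
    field_simp
  have hopen : IsOpen (φ '' I) := isOpen_image_of_hasDerivAt_pos hI hφ hyk
  have hu'' : ∀ x ∈ I,
      HasDerivAt (deriv u) ((k₂ + 1) * deriv (deriv y) x * (y x ^ k₂)⁻¹) (φ x) := by
    intro x hx
    have hu'_eq : deriv u =ᶠ[𝓝 (φ x)] fun s => (k₂ + 1) * deriv y (ψ s) := by
      filter_upwards [hopen.mem_nhds ⟨x, hx, rfl⟩]
      rintro _ ⟨z, hz, rfl⟩
      rw [(hu' z hz).deriv, hinv z hz]
    exact (((hy2 x hx).hasDerivAt.const_mul (k₂ + 1)).comp_of_leftInverse (hψ' x hx)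
      (hinv x hx)).congr_of_eventuallyEq hu'_eq
  rintro _ ⟨x, hx, rfl⟩
  rw [(hu'' x hx).deriv, (hu' x hx).deriv, hinv x hx]
  have hsplit : y x ^ (2 * k₂ + 1) = y x ^ k₂ * y x ^ (k₂ + 1) := by
    rw [← Real.rpow_add (hpos x hx)]
    ring_nf
  have hode_x := hode x hx
  rw [hsplit] at hode_x
  have hyk_ne := (hyk x hx).ne'
  field_simp
  linear_combination (k₂ + 1) * hode_x

/-- The generalized Sundman transformation u = y^(k₂+1), dt = y^(k₂) dx maps positive
solutions of y'' + y^(k₂) y' + μ₁ y^(2k₂+1) = 0 to solutions of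
u'' + u' + μ₁(k₂+1)u = 0. -/
theorem stmt_13 (k₂ μ₁ : ℝ) (hk0 : k₂ ≠ 0) (hk1 : k₂ ≠ -1)
    (I : Set ℝ) (hI : IsOpen I) (y φ ψ : ℝ → ℝ)
    (hpos : ∀ x ∈ I, 0 < y x)
    (hy1 : ∀ x ∈ I, DifferentiableAt ℝ y x)
    (hy2 : ∀ x ∈ I, DifferentiableAt ℝ (deriv y) x)
    (hode : ∀ x ∈ I,
      deriv (deriv y) x + (y x) ^ k₂ * deriv y x + μ₁ * (y x) ^ (2 * k₂ + 1) = 0)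
    (hφ : ∀ x ∈ I, HasDerivAt φ ((y x) ^ k₂) x)
    (hinv : ∀ x ∈ I, ψ (φ x) = x)
    (hψ : ∀ t ∈ φ '' I, DifferentiableAt ℝ ψ t) :
    ∀ t ∈ φ '' I,
      deriv (deriv (fun s : ℝ => (y (ψ s)) ^ (k₂ + 1))) t
        + deriv (fun s : ℝ => (y (ψ s)) ^ (k₂ + 1)) t
        + μ₁ * (k₂ + 1) * (y (ψ t)) ^ (k₂ + 1) = 0 :=
  stmt_13_general k₂ μ₁ I hI y φ ψ hpos hy1 hy2 hode hφ hinv hψ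
end

section
/- Let F, G be smooth on an open set with G·F_y ≠ 0, and let α, β, γ be real constants. If y : I → ℝ is twice differentiable, φ' = G(x,y(x)), u∘φ = F(x,y(x)), and u satisfies u'' + βu' + αu = γ, then y satisfies y'' + λ₂(x,y)(y')² + λ₁(x,y)y' + λ₀(x,y) = 0, where λ₂ = (F_{yy}G − F_yG_y)/(GF_y), λ₁ = (2F_{xy}G − F_xG_y − F_yG_x + F_yβG²)/(GF_y), λ₀ = (F_{xx}G − F_xG_x + F_xβG² + αFG³ − γG³)/(GF_y). -/
/-- Partial derivative in the first variable. -/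
noncomputable def pdx (f : ℝ → ℝ → ℝ) : ℝ → ℝ → ℝ :=
  fun x y => deriv (fun x' => f x' y) x

/-- Partial derivative in the second variable. -/
noncomputable def pdy (f : ℝ → ℝ → ℝ) : ℝ → ℝ → ℝ :=
  fun x y => deriv (fun y' => f x y') y

private lemma hasDerivAt_uncurry {f : ℝ × ℝ → ℝ} (hf : Differentiable ℝ f)
    {g : ℝ → ℝ} {x g' : ℝ} (hg : HasDerivAt g g' x) :
    HasDerivAt (fun t => f (t, g t))
      (fderiv ℝ f (x, g x) (1, 0) + fderiv ℝ f (x, g x) (0, 1) * g') x := by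
  have h1 : HasDerivAt (fun t : ℝ => (t, g t)) ((1 : ℝ), g') x :=
    (hasDerivAt_id x).prodMk hg
  have h2 := (hf (x, g x)).hasFDerivAt.comp_hasDerivAt x h1
  refine h2.congr_deriv ?_
  have hv : ((1 : ℝ), g') = ((1:ℝ), (0:ℝ)) + g' • ((0:ℝ), (1:ℝ)) := by
    simp
  rw [hv, map_add, map_smul]
  simp [smul_eq_mul]
  ring

private lemma pdx_eq' {F : ℝ → ℝ → ℝ}
    (hf : Differentiable ℝ (fun p : ℝ × ℝ => F p.1 p.2)) (x y : ℝ) :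
    pdx F x y = fderiv ℝ (fun p : ℝ × ℝ => F p.1 p.2) (x, y) (1, 0) := by
  have h := hasDerivAt_uncurry hf (g := fun _ : ℝ => y) (hasDerivAt_const x y)
  simpa [pdx] using h.deriv

private lemma pdy_eq' {F : ℝ → ℝ → ℝ}
    (hf : Differentiable ℝ (fun p : ℝ × ℝ => F p.1 p.2)) (x y : ℝ) :
    pdy F x y = fderiv ℝ (fun p : ℝ × ℝ => F p.1 p.2) (x, y) (0, 1) := by
  have h1 : HasDerivAt (fun t : ℝ => (x, t)) ((0:ℝ), (1:ℝ)) y :=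
    (hasDerivAt_const y x).prodMk (hasDerivAt_id y)
  have h2 := (hf (x, y)).hasFDerivAt.comp_hasDerivAt y h1
  simpa [pdy, Function.comp_def] using h2.deriv

private lemma hasDerivAt_comp2 {F : ℝ → ℝ → ℝ}
    (hf : Differentiable ℝ (fun p : ℝ × ℝ => F p.1 p.2))
    {g : ℝ → ℝ} {x g' : ℝ} (hg : HasDerivAt g g' x) :
    HasDerivAt (fun t => F t (g t))
      (pdx F x (g x) + pdy F x (g x) * g') x := by
  have h := hasDerivAt_uncurry hf hg
  rw [pdx_eq' hf, pdy_eq' hf]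
  exact h

private lemma contDiff_fderiv_apply {f : ℝ × ℝ → ℝ} (hf : ContDiff ℝ (⊤ : ℕ∞) f)
    (v : ℝ × ℝ) : ContDiff ℝ (⊤ : ℕ∞) (fun p => fderiv ℝ f p v) :=
  (hf.fderiv_right (by simp)).clm_apply contDiff_const

private lemma fderiv_fderiv_apply {f : ℝ × ℝ → ℝ} (hf : ContDiff ℝ (⊤ : ℕ∞) f)
    (v w p : ℝ × ℝ) :
    fderiv ℝ (fun q => fderiv ℝ f q v) p w = fderiv ℝ (fderiv ℝ f) p w v := by
  have hd : DifferentiableAt ℝ (fderiv ℝ f) p :=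
    ((hf.fderiv_right (m := (⊤ : ℕ∞)) (by simp)).differentiable (by simp)) p
  have h := (ContinuousLinearMap.apply ℝ ℝ v).hasFDerivAt.comp p hd.hasFDerivAt
  have heq : (fun q => fderiv ℝ f q v)
      = (ContinuousLinearMap.apply ℝ ℝ v) ∘ (fderiv ℝ f) := rfl
  rw [heq, h.fderiv]
  rfl

private lemma clairaut {f : ℝ × ℝ → ℝ} (hf : ContDiff ℝ (⊤ : ℕ∞) f) (p v w : ℝ × ℝ) :
    fderiv ℝ (fderiv ℝ f) p v w = fderiv ℝ (fderiv ℝ f) p w v :=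
  second_derivative_symmetric
    (fun q => (hf.differentiable (by simp) q).hasFDerivAt)
    (((hf.fderiv_right (m := (⊤ : ℕ∞)) (by simp)).differentiable (by simp) p).hasFDerivAt) v w

/-- Necessary form of a Sundman-linearizable equation: if u = F(x,y), dt = G(x,y)dx
maps y to a solution u of u'' + βu' + αu = γ (with constant α, β, γ), then y
satisfies y'' + λ₂(y')² + λ₁y' + λ₀ = 0 with λ₀, λ₁, λ₂ as in (6)–(8). -/
theorem stmt_17 (I : Set ℝ) (hI : IsOpen I) (u y φ : ℝ → ℝ) (F G : ℝ → ℝ → ℝ)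
    (α β γ : ℝ)
    (hF : ContDiff ℝ (⊤ : ℕ∞) (fun p : ℝ × ℝ => F p.1 p.2))
    (hG : ContDiff ℝ (⊤ : ℕ∞) (fun p : ℝ × ℝ => G p.1 p.2))
    (hKne : ∀ x y : ℝ, G x y * pdy F x y ≠ 0)
    (hy1 : ∀ x ∈ I, DifferentiableAt ℝ y x)
    (hy2 : ∀ x ∈ I, DifferentiableAt ℝ (deriv y) x)
    (hu1 : Differentiable ℝ u)
    (hu2 : Differentiable ℝ (deriv u))
    (hφ : ∀ x ∈ I, HasDerivAt φ (G x (y x)) x)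
    (huF : ∀ x ∈ I, u (φ x) = F x (y x))
    (hlin : ∀ t : ℝ, deriv (deriv u) t + β * deriv u t + α * u t = γ) :
    ∀ x ∈ I,
      deriv (deriv y) x
        + ((pdy (pdy F) x (y x) * G x (y x) - pdy F x (y x) * pdy G x (y x))
            / (G x (y x) * pdy F x (y x))) * (deriv y x) ^ 2
        + ((2 * pdy (pdx F) x (y x) * G x (y x) - pdx F x (y x) * pdy G x (y x)
              - pdy F x (y x) * pdx G x (y x) + pdy F x (y x) * β * (G x (y x)) ^ 2)
            / (G x (y x) * pdy F x (y x))) * deriv y x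
        + ((pdx (pdx F) x (y x) * G x (y x) - pdx F x (y x) * pdx G x (y x)
              + pdx F x (y x) * β * (G x (y x)) ^ 2 + α * F x (y x) * (G x (y x)) ^ 3
              - γ * (G x (y x)) ^ 3)
            / (G x (y x) * pdy F x (y x))) = 0 := by
  intro x₀ hx₀
  set Fp : ℝ × ℝ → ℝ := fun p => F p.1 p.2 with hFp
  set Gp : ℝ × ℝ → ℝ := fun p => G p.1 p.2 with hGp
  have hFd : Differentiable ℝ Fp := hF.differentiable (by simp)
  have hGd : Differentiable ℝ Gp := hG.differentiable (by simp)
  -- first key identity on I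
  have hkey : ∀ x ∈ I, deriv u (φ x) * G x (y x)
      = pdx F x (y x) + pdy F x (y x) * deriv y x := by
    intro x hx
    have h1 : HasDerivAt (fun t => F t (y t))
        (pdx F x (y x) + pdy F x (y x) * deriv y x) x :=
      hasDerivAt_comp2 hFd ((hy1 x hx).hasDerivAt)
    have h2 : HasDerivAt (u ∘ φ) (deriv u (φ x) * G x (y x)) x :=
      ((hu1 (φ x)).hasDerivAt).comp x (hφ x hx)
    have heq : (fun t => F t (y t)) =ᶠ[nhds x] (u ∘ φ) := by
      filter_upwards [hI.mem_nhds hx] with t ht using (huF t ht).symm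
    exact ((h2.congr_of_eventuallyEq heq).unique h1)
  -- curried first partial derivatives of F
  set F₁ : ℝ → ℝ → ℝ := fun a b => fderiv ℝ Fp (a, b) (1, 0) with hF₁
  set F₂ : ℝ → ℝ → ℝ := fun a b => fderiv ℝ Fp (a, b) (0, 1) with hF₂
  have hF1eq : pdx F = F₁ := by funext a b; exact pdx_eq' hFd a b
  have hF2eq : pdy F = F₂ := by funext a b; exact pdy_eq' hFd a b
  have hF1c : Differentiable ℝ (fun p : ℝ × ℝ => F₁ p.1 p.2) :=
    (contDiff_fderiv_apply hF ((1:ℝ), (0:ℝ))).differentiable (by simp)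
  have hF2c : Differentiable ℝ (fun p : ℝ × ℝ => F₂ p.1 p.2) :=
    (contDiff_fderiv_apply hF ((0:ℝ), (1:ℝ))).differentiable (by simp)
  -- second partials as components of second fderiv
  have hpxx : pdx (pdx F) x₀ (y x₀)
      = fderiv ℝ (fderiv ℝ Fp) (x₀, y x₀) (1, 0) (1, 0) := by
    rw [hF1eq, pdx_eq' hF1c, ← fderiv_fderiv_apply hF ((1:ℝ),(0:ℝ)) ((1:ℝ),(0:ℝ))]
  have hpyx : pdy (pdx F) x₀ (y x₀)
      = fderiv ℝ (fderiv ℝ Fp) (x₀, y x₀) (0, 1) (1, 0) := by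
    rw [hF1eq, pdy_eq' hF1c, ← fderiv_fderiv_apply hF ((1:ℝ),(0:ℝ)) ((0:ℝ),(1:ℝ))]
  have hpxy : pdx (pdy F) x₀ (y x₀)
      = fderiv ℝ (fderiv ℝ Fp) (x₀, y x₀) (1, 0) (0, 1) := by
    rw [hF2eq, pdx_eq' hF2c, ← fderiv_fderiv_apply hF ((0:ℝ),(1:ℝ)) ((1:ℝ),(0:ℝ))]
  have hpyy : pdy (pdy F) x₀ (y x₀)
      = fderiv ℝ (fderiv ℝ Fp) (x₀, y x₀) (0, 1) (0, 1) := by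
    rw [hF2eq, pdy_eq' hF2c, ← fderiv_fderiv_apply hF ((0:ℝ),(1:ℝ)) ((0:ℝ),(1:ℝ))]
  have hsym : pdx (pdy F) x₀ (y x₀) = pdy (pdx F) x₀ (y x₀) := by
    rw [hpxy, hpyx, clairaut hF]
  -- differentiate the key identity at x₀
  have hL : HasDerivAt (fun t => deriv u (φ t) * G t (y t))
      ((deriv (deriv u) (φ x₀) * G x₀ (y x₀)) * G x₀ (y x₀)
        + deriv u (φ x₀) * (pdx G x₀ (y x₀) + pdy G x₀ (y x₀) * deriv y x₀)) x₀ :=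
    (((hu2 (φ x₀)).hasDerivAt).comp x₀ (hφ x₀ hx₀)).mul
      (hasDerivAt_comp2 hGd ((hy1 x₀ hx₀).hasDerivAt))
  have hR : HasDerivAt (fun t => pdx F t (y t) + pdy F t (y t) * deriv y t)
      ((pdx (pdx F) x₀ (y x₀) + pdy (pdx F) x₀ (y x₀) * deriv y x₀)
        + ((pdx (pdy F) x₀ (y x₀) + pdy (pdy F) x₀ (y x₀) * deriv y x₀) * deriv y x₀
            + pdy F x₀ (y x₀) * deriv (deriv y) x₀)) x₀ := by
    rw [hF1eq, hF2eq]
    have h1 := hasDerivAt_comp2 hF1c ((hy1 x₀ hx₀).hasDerivAt)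
    have h2 := (hasDerivAt_comp2 hF2c ((hy1 x₀ hx₀).hasDerivAt)).mul
      ((hy2 x₀ hx₀).hasDerivAt)
    have h3 := h1.add h2
    rw [hF1eq, hF2eq] at *
    exact h3
  have heq2 : (fun t => deriv u (φ t) * G t (y t))
      =ᶠ[nhds x₀] (fun t => pdx F t (y t) + pdy F t (y t) * deriv y t) := by
    filter_upwards [hI.mem_nhds hx₀] with t ht using hkey t ht
  have e2 := (hL.congr_of_eventuallyEq heq2.symm).unique hR
  -- substitutions
  have e1 := hkey x₀ hx₀
  have e3 := hlin (φ x₀)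
  have e4 := huF x₀ hx₀
  have hG0 : G x₀ (y x₀) ≠ 0 := left_ne_zero_of_mul (hKne x₀ (y x₀))
  have hFy0 : pdy F x₀ (y x₀) ≠ 0 := right_ne_zero_of_mul (hKne x₀ (y x₀))
  rw [hsym] at e2
  field_simp
  linear_combination (- G x₀ (y x₀)) * e2 + (G x₀ (y x₀))^3 * e3
    + (pdx G x₀ (y x₀) + pdy G x₀ (y x₀) * deriv y x₀ - β * (G x₀ (y x₀))^2) * e1
    - α * (G x₀ (y x₀))^3 * e4
end
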